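/- arXiv:2005.13660 — 5 statements merged into one kernel-verified Lean document; each statement's English description precedes it below -/
import Mathlib

section
/- Define F₅ : (0,2) → ℝ by F₅(h) = 4h − 2h² + 2√(4h² − h⁴). Then F₅ attains its maximum on [1,2) at the unique point η satisfying 2η³ − 2η² − 7η + 8 = 0 with η ≈ 1.2622, and the maximum value is F₅(η) = 4η − 2η² + 2√(4η² − η⁴) ≈ 5.77886. -/
/-!
Writing `s(h) = √(4h² − h⁴)`, the critical-point equation of `F₅` is `(h − 1) s(h) = 2h − h³`,
which after squaring and dividing by `h` is the cubic `2h³ − 2h² − 7h + 8 = 0`; `η` is its root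
in `[1, √2]`, given by the trigonometric formula for the roots of a cubic. At that root the
parabola `h² − 2h + (s(η) + 2η − η²)` touches `s` at `η` and lies strictly above it elsewhere on
`h ≥ 0`, because `η² · (parabola² − s²)` is `(h − η)²` times a positive quadratic. Adding
`4h − 2h²` to both sides turns this into `F₅ h < F₅ η` for `h ≠ η`.
-/

open Real

noncomputable def F₅ (h : ℝ) : ℝ := 4 * h - 2 * h ^ 2 + 2 * Real.sqrt (4 * h ^ 2 - h ^ 4)

noncomputable def η : ℝ :=
  (1 / 3) * (1 - Real.sqrt 46 * Real.sin (π / 6 - (1 / 3) * Real.arccos (-149 / (23 * Real.sqrt 46))))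

section Tangency

variable {a : ℝ}

theorem sqrt_mul_sub_one_eq_of_cubic_eq_zero (ha1 : 1 ≤ a) (ha2 : a ^ 2 ≤ 2)
    (hroot : 2 * a ^ 3 - 2 * a ^ 2 - 7 * a + 8 = 0) :
    √(4 * a ^ 2 - a ^ 4) * (a - 1) = 2 * a - a ^ 3 := by
  have hrad : 0 ≤ 4 * a ^ 2 - a ^ 4 := by nlinarith
  have hlhs : 0 ≤ √(4 * a ^ 2 - a ^ 4) * (a - 1) := by
    have := sub_nonneg.2 ha1
    positivity
  have hrhs : 0 ≤ 2 * a - a ^ 3 := by nlinarith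
  refine (pow_left_inj₀ hlhs hrhs two_ne_zero).1 ?_
  rw [mul_pow, sq_sqrt hrad]
  linear_combination (-a ^ 3) * hroot

theorem one_lt_sqrt_of_one_le_of_sq_le_two (ha1 : 1 ≤ a) (ha2 : a ^ 2 ≤ 2) :
    1 < √(4 * a ^ 2 - a ^ 4) := by
  rw [lt_sqrt zero_le_one]
  nlinarith

theorem F₅_lt_of_cubic_eq_zero (ha1 : 1 ≤ a) (ha2 : a ^ 2 ≤ 2)
    (hroot : 2 * a ^ 3 - 2 * a ^ 2 - 7 * a + 8 = 0) {h : ℝ} (hh : 0 ≤ h) (hne : h ≠ a) :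
    F₅ h < F₅ a := by
  set t := √(4 * a ^ 2 - a ^ 4)
  have ht2 : t ^ 2 = 4 * a ^ 2 - a ^ 4 := sq_sqrt (by nlinarith)
  have htan : t * (a - 1) = 2 * a - a ^ 3 := sqrt_mul_sub_one_eq_of_cubic_eq_zero ha1 ha2 hroot
  have ht1 : 1 < t := one_lt_sqrt_of_one_le_of_sq_le_two ha1 ha2
  set c := t + 2 * a - a ^ 2
  have hc : 1 < c := by nlinarith
  have hR : 0 < h ^ 2 - 2 * h + c := by nlinarith [sq_nonneg (h - 1)]
  have hQ : 0 < 2 * a ^ 2 * h ^ 2 + 4 * a ^ 2 * (a - 1) * h + c ^ 2 := by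
    have : 0 ≤ a ^ 2 * (a - 1) * h := by
      have := sub_nonneg.2 ha1
      positivity
    nlinarith [sq_nonneg (a * h)]
  have key : a ^ 2 * ((h ^ 2 - 2 * h + c) ^ 2 - (4 * h ^ 2 - h ^ 4)) =
      (h - a) ^ 2 * (2 * a ^ 2 * h ^ 2 + 4 * a ^ 2 * (a - 1) * h + c ^ 2) := by
    linear_combination (2 * h * a - h ^ 2) * ht2 + (4 * h * a * (h - a)) * htan
  have hs : √(4 * h ^ 2 - h ^ 4) < h ^ 2 - 2 * h + c := by
    rw [sqrt_lt' hR]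
    have := mul_pos (sq_pos_of_ne_zero (sub_ne_zero.2 hne)) hQ
    rw [← key] at this
    nlinarith [sq_nonneg a]
  unfold F₅
  linarith

end Tangency

theorem sin_pi_div_six_sub_arccos_triple {y : ℝ} (hy1 : -1 ≤ y) (hy2 : y ≤ 1) :
    4 * sin (π / 6 - (1 / 3) * arccos y) ^ 3 - 3 * sin (π / 6 - (1 / 3) * arccos y) = -y := by
  have h3 : 3 * (π / 6 - (1 / 3) * arccos y) = π / 2 - arccos y := by ring
  have := sin_three_mul (π / 6 - (1 / 3) * arccos y)
  rw [h3, sin_pi_div_two_sub, cos_arccos hy1 hy2] at this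
  linarith

theorem sin_pi_div_six_sub_arccos_mem_Icc {y : ℝ} (hy : y ≤ 0) :
    sin (π / 6 - (1 / 3) * arccos y) ∈ Set.Icc (-(1 / 2)) 0 := by
  have hlow : π / 2 ≤ arccos y := not_lt.1 (arccos_lt_pi_div_two.not.2 (not_lt.2 hy))
  have hhigh : arccos y ≤ π := arccos_le_pi y
  constructor
  · rw [← sin_pi_div_six, ← sin_neg]
    exact sin_le_sin_of_le_of_le_pi_div_two (by linarith [pi_pos]) (by linarith) (by linarith)
  · exact sin_nonpos_of_nonpos_of_neg_pi_le (by linarith) (by linarith [pi_pos])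

private theorem sqrt_46_mem_Ioo : √46 ∈ Set.Ioo 6.7 6.79 := by
  have h := sq_sqrt (show (0 : ℝ) ≤ 46 by norm_num)
  constructor <;> nlinarith [sqrt_nonneg 46]

private theorem arccos_arg_mem_Icc : -149 / (23 * √46) ∈ Set.Icc (-1) 0 := by
  have hs := sqrt_46_mem_Ioo.1
  constructor
  · rw [le_div_iff₀ (by linarith)]
    linarith
  · exact div_nonpos_of_nonpos_of_nonneg (by norm_num) (by linarith)

theorem η_cubic_eq_zero : 2 * η ^ 3 - 2 * η ^ 2 - 7 * η + 8 = 0 := by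
  obtain ⟨hy1, hy0⟩ := arccos_arg_mem_Icc
  have htriple := sin_pi_div_six_sub_arccos_triple hy1 (hy0.trans zero_le_one)
  unfold η
  set S := sin (π / 6 - (1 / 3) * arccos (-149 / (23 * √46)))
  have h46 : √46 ^ 2 = 46 := sq_sqrt (by norm_num)
  have hS : 23 * √46 * (4 * S ^ 3 - 3 * S) = 149 := by
    rw [htriple]
    field_simp
  linear_combination (-(1 / 27 : ℝ)) * hS + (-(2 / 27) * √46 * S ^ 3) * h46

theorem η_mem_Ioo : η ∈ Set.Ioo 0 1.47 := by
  obtain ⟨hS1, hS0⟩ := sin_pi_div_six_sub_arccos_mem_Icc arccos_arg_mem_Icc.2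
  obtain ⟨hs1, hs2⟩ := sqrt_46_mem_Ioo
  unfold η
  constructor <;> nlinarith

theorem one_le_η : 1 ≤ η := by
  obtain ⟨h0, h1⟩ := η_mem_Ioo
  nlinarith [η_cubic_eq_zero]

theorem η_sq_le_two : η ^ 2 ≤ 2 := by
  obtain ⟨h0, h1⟩ := η_mem_Ioo
  nlinarith [η_cubic_eq_zero, one_le_η]

/-- F₅(h) = 4h − 2h² + 2√(4h² − h⁴) attains its maximum on [1,2) at the unique point η
satisfying 2η³ − 2η² − 7η + 8 = 0 (η ≈ 1.2622), with maximum value F₅(η) ≈ 5.77886. -/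
theorem F₅_max_at_η :
    η ∈ Set.Ico (1 : ℝ) 2 ∧
    2 * η ^ 3 - 2 * η ^ 2 - 7 * η + 8 = 0 ∧
    (∀ h ∈ Set.Ico (1 : ℝ) 2, F₅ h ≤ F₅ η) ∧
    (∀ h ∈ Set.Ico (1 : ℝ) 2, F₅ h = F₅ η → h = η) ∧
    F₅ η = 4 * η - 2 * η ^ 2 + 2 * Real.sqrt (4 * η ^ 2 - η ^ 4) := by
  have hlt : ∀ h ∈ Set.Ico (1 : ℝ) 2, h ≠ η → F₅ h < F₅ η := fun h hh hne ↦
    F₅_lt_of_cubic_eq_zero one_le_η η_sq_le_two η_cubic_eq_zero (by linarith [hh.1]) hne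
  refine ⟨⟨one_le_η, by nlinarith [η_sq_le_two, one_le_η]⟩, η_cubic_eq_zero, fun h hh ↦ ?_,
    fun h hh heq ↦ ?_, rfl⟩
  · rcases eq_or_ne h η with rfl | hne
    · exact le_rfl
    · exact (hlt h hh hne).le
  · by_contra hne
    exact (hlt h hh hne).ne heq
end

section
/- For v ≥ 5 let ω_v = π/(v−2) and define S : (0,2) → ℝ by S(h) = (v−2)·sin ω_v · (√(2h³ − h⁴ + (2h − h²)²·cos²ω_v) + √((2−h)²(2h − h²) + (2h − h²)²·cos²ω_v)). Then h = 1 is the unique critical point of S in (0,2); moreover S′(h) > 0 for h ∈ (0,1) and S′(h) < 0 for h ∈ (1,2), so S attains its strict global maximum at h = 1 with value S(1) = 2(v−2)·√(1 + cos²ω_v)·sin ω_v. -/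
/-!
The polar axis cuts the bipyramid into two pyramids over the same base, of circumradius
`r = √(2h − h²)`; the one of height `h` has lateral area `(v−2) sin ω · √(h²r² + r⁴cos²ω)`, and
the other one is obtained by replacing `h` with `2 − h`, which fixes `r`. So `S(2 − h) = S(h)`,
hence `S′(h) = −S′(2 − h)` and in particular `S′(1) = 0`; it remains to show `S′ > 0` on `(0, 1)`.
With `A` the radicand of a single pyramid, `2S′(h)/((v−2) sin ω) = A′(h)/√A(h) − A′(2−h)/√A(2−h)`.
The subtracted quotient is nonpositive for `h ≤ 1/2`; for `1/2 < h < 1` both quotients are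
positive and comparing their squares leaves `A′(2−h)²A(h) < A′(h)²A(2−h)`, where the difference
factors as `16 (1 − h) (2h − h²)² · G` with `G > 0`.
-/

open Real Set

section

variable {f : ℝ → ℝ}

theorem deriv_eq_neg_deriv_of_symm {a : ℝ} (hf : ∀ x, f (a - x) = f x) (x : ℝ) :
    deriv f x = -deriv f (a - x) := by
  rw [← deriv_comp_const_sub]
  simp only [hf]

theorem lt_of_deriv_pos_of_deriv_neg {a b m x : ℝ} (hf : ContinuousOn f (Icc a b))
    (hpos : ∀ y ∈ Ioo a m, 0 < deriv f y) (hneg : ∀ y ∈ Ioo m b, deriv f y < 0)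
    (hm : m ∈ Icc a b) (hx : x ∈ Icc a b) (hxm : x ≠ m) : f x < f m := by
  rcases hxm.lt_or_gt with hlt | hgt
  · refine strictMonoOn_of_deriv_pos (convex_Icc x m) (hf.mono (Icc_subset_Icc hx.1 hm.2))
      (fun y hy => ?_) (left_mem_Icc.2 hlt.le) (right_mem_Icc.2 hlt.le) hlt
    rw [interior_Icc] at hy
    exact hpos y ⟨hx.1.trans_lt hy.1, hy.2⟩
  · refine strictAntiOn_of_deriv_neg (convex_Icc m x) (hf.mono (Icc_subset_Icc hm.1 hx.2))
      (fun y hy => ?_) (left_mem_Icc.2 hgt.le) (right_mem_Icc.2 hgt.le) hgt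
    rw [interior_Icc] at hy
    exact hneg y ⟨hy.1, hy.2.trans_le hx.2⟩

end

noncomputable section

/-- With `c = cos² ω` and `r² = 2h − h²`, this is `h²r² + r⁴c`. -/
def pyramidRadicand (c h : ℝ) : ℝ := 2 * h ^ 3 - h ^ 4 + (2 * h - h ^ 2) ^ 2 * c

def pyramidRadicandDeriv (c h : ℝ) : ℝ :=
  6 * h ^ 2 - 4 * h ^ 3 + 4 * (2 * h - h ^ 2) * (1 - h) * c

def bipyramidArea (K c h : ℝ) : ℝ :=
  K * (√(pyramidRadicand c h) + √(pyramidRadicand c (2 - h)))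

variable {K c h : ℝ}

theorem hasDerivAt_pyramidRadicand (c h : ℝ) :
    HasDerivAt (pyramidRadicand c) (pyramidRadicandDeriv c h) h := by
  have hq := ((hasDerivAt_id' h).const_mul 2).fun_sub (hasDerivAt_pow 2 h)
  refine ((((hasDerivAt_pow 3 h).const_mul 2).fun_sub (hasDerivAt_pow 4 h)).fun_add
    ((hq.pow 2).mul_const c)).congr_deriv ?_
  simp only [pyramidRadicandDeriv]
  push_cast
  ring

theorem pyramidRadicand_pos (hc : 0 ≤ c) (h0 : 0 < h) (h2 : h < 2) : 0 < pyramidRadicand c h := by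
  have : 0 < h ^ 3 * (2 - h) := mul_pos (pow_pos h0 3) (by linarith)
  have : 0 ≤ (2 * h - h ^ 2) ^ 2 * c := by positivity
  unfold pyramidRadicand
  nlinarith

theorem pyramidRadicandDeriv_pos (hc : 0 ≤ c) (h0 : 0 < h) (h1 : h ≤ 1) :
    0 < pyramidRadicandDeriv c h := by
  have : 0 < 2 * h ^ 2 * (3 - 2 * h) := mul_pos (by positivity) (by linarith)
  have : 0 ≤ 4 * (h * (2 - h)) * (1 - h) * c :=
    mul_nonneg (mul_nonneg (mul_nonneg zero_le_four (mul_nonneg h0.le (by linarith)))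
      (by linarith)) hc
  unfold pyramidRadicandDeriv
  nlinarith

theorem pyramidRadicandDeriv_nonpos (hc : 0 ≤ c) (h1 : 3 / 2 ≤ h) (h2 : h ≤ 2) :
    pyramidRadicandDeriv c h ≤ 0 := by
  have : 2 * h ^ 2 * (3 - 2 * h) ≤ 0 := mul_nonpos_of_nonneg_of_nonpos (by positivity) (by linarith)
  have : 4 * (h * (2 - h)) * (h - 1) * c ≥ 0 :=
    mul_nonneg (mul_nonneg (mul_nonneg zero_le_four (mul_nonneg (by linarith) (by linarith)))
      (by linarith)) hc
  unfold pyramidRadicandDeriv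
  nlinarith

theorem pyramidRadicandDeriv_sq_mul_lt (hc : 0 ≤ c) (h0 : 1 / 2 < h) (h1 : h < 1) :
    pyramidRadicandDeriv c (2 - h) ^ 2 * pyramidRadicand c h <
      pyramidRadicandDeriv c h ^ 2 * pyramidRadicand c (2 - h) := by
  set q := 2 * h - h ^ 2
  set G := q * (1 + 2 * c) * (q - (1 - h) ^ 2 + 2 * c * (1 - h) ^ 2) +
    2 * c * (6 * h - 3 * h ^ 2 - 2) * ((1 - h) ^ 2 + c * q)
  have hfactor : pyramidRadicandDeriv c h ^ 2 * pyramidRadicand c (2 - h) -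
      pyramidRadicandDeriv c (2 - h) ^ 2 * pyramidRadicand c h = 16 * (1 - h) * q ^ 2 * G := by
    simp only [pyramidRadicand, pyramidRadicandDeriv, q, G]
    ring
  have hq : 0 < q := by nlinarith
  have hG : 0 < G := by
    have : 0 < q - (1 - h) ^ 2 + 2 * c * (1 - h) ^ 2 := by nlinarith
    have : 0 < 6 * h - 3 * h ^ 2 - 2 := by nlinarith
    positivity
  have : 0 < 16 * (1 - h) * q ^ 2 * G := by
    have : 0 < 1 - h := by linarith
    positivity
  linarith

theorem pyramidRadicandDeriv_div_sqrt_lt (hc : 0 ≤ c) (h0 : 0 < h) (h1 : h < 1) :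
    pyramidRadicandDeriv c (2 - h) / √(pyramidRadicand c (2 - h)) <
      pyramidRadicandDeriv c h / √(pyramidRadicand c h) := by
  have hA := pyramidRadicand_pos hc h0 (by linarith)
  have hB := pyramidRadicand_pos hc (h := 2 - h) (by linarith) (by linarith)
  have hrhs : 0 < pyramidRadicandDeriv c h / √(pyramidRadicand c h) :=
    div_pos (pyramidRadicandDeriv_pos hc h0 h1.le) (sqrt_pos.2 hA)
  rcases le_or_gt (pyramidRadicandDeriv c (2 - h)) 0 with hle | hlt
  · exact (div_nonpos_of_nonpos_of_nonneg hle (sqrt_nonneg _)).trans_lt hrhs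
  · have hhalf : 1 / 2 < h := by
      by_contra! hh
      exact hlt.not_ge (pyramidRadicandDeriv_nonpos hc (by linarith) (by linarith))
    refine lt_of_pow_lt_pow_left₀ 2 hrhs.le ?_
    rw [div_pow, div_pow, sq_sqrt hA.le, sq_sqrt hB.le, div_lt_div_iff₀ hB hA]
    exact pyramidRadicandDeriv_sq_mul_lt hc hhalf h1

theorem bipyramidArea_two_sub (K c h : ℝ) : bipyramidArea K c (2 - h) = bipyramidArea K c h := by
  rw [bipyramidArea, bipyramidArea, sub_sub_cancel, add_comm]

theorem bipyramidArea_one (K c : ℝ) : bipyramidArea K c 1 = 2 * K * √(1 + c) := by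
  norm_num [bipyramidArea, pyramidRadicand]
  ring

theorem continuous_bipyramidArea (K c : ℝ) : Continuous (bipyramidArea K c) := by
  unfold bipyramidArea pyramidRadicand
  fun_prop

theorem hasDerivAt_bipyramidArea (hc : 0 ≤ c) (h0 : 0 < h) (h2 : h < 2) :
    HasDerivAt (bipyramidArea K c)
      (K * (pyramidRadicandDeriv c h / √(pyramidRadicand c h) -
        pyramidRadicandDeriv c (2 - h) / √(pyramidRadicand c (2 - h))) / 2) h := by
  have hA := hasDerivAt_pyramidRadicand c h |>.sqrt (pyramidRadicand_pos hc h0 h2).ne'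
  have hB := (hasDerivAt_pyramidRadicand c (2 - h) |>.sqrt
    (pyramidRadicand_pos hc (h := 2 - h) (by linarith) (by linarith)).ne').comp h
    ((hasDerivAt_id h).const_sub 2)
  refine ((hA.fun_add hB).const_mul K).congr_deriv ?_
  ring

theorem deriv_bipyramidArea_pos (hK : 0 < K) (hc : 0 ≤ c) (h0 : 0 < h) (h1 : h < 1) :
    0 < deriv (bipyramidArea K c) h := by
  rw [(hasDerivAt_bipyramidArea hc h0 (by linarith)).deriv]
  exact div_pos (mul_pos hK (sub_pos.2 (pyramidRadicandDeriv_div_sqrt_lt hc h0 h1))) two_pos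

theorem deriv_bipyramidArea_eq_neg (K c h : ℝ) :
    deriv (bipyramidArea K c) h = -deriv (bipyramidArea K c) (2 - h) :=
  deriv_eq_neg_deriv_of_symm (bipyramidArea_two_sub K c) h

theorem deriv_bipyramidArea_one (K c : ℝ) : deriv (bipyramidArea K c) 1 = 0 := by
  have := deriv_bipyramidArea_eq_neg K c 1
  norm_num at this
  linarith

end

/-- For v ≥ 5 and ω = π/(v−2), the bipyramid surface area function
S(h) = (v−2)·sin ω·(√(2h³ − h⁴ + (2h−h²)²cos²ω) + √((2−h)²(2h−h²) + (2h−h²)²cos²ω))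
has h = 1 as its unique critical point on (0,2), with S′ > 0 on (0,1) and S′ < 0 on (1,2),
hence attains its strict global maximum at h = 1 with value 2(v−2)·√(1+cos²ω)·sin ω. -/
theorem bipyramid_surface_max (v : ℕ) (hv : 5 ≤ v) :
    ∀ S : ℝ → ℝ,
      (S = fun h => (v - 2 : ℝ) * Real.sin (π / (v - 2)) *
        (Real.sqrt (2 * h ^ 3 - h ^ 4 + (2 * h - h ^ 2) ^ 2 * Real.cos (π / (v - 2)) ^ 2) +
         Real.sqrt ((2 - h) ^ 2 * (2 * h - h ^ 2) +
            (2 * h - h ^ 2) ^ 2 * Real.cos (π / (v - 2)) ^ 2))) →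
      (∀ h ∈ Ioo (0 : ℝ) 1, 0 < deriv S h) ∧
      (∀ h ∈ Ioo (1 : ℝ) 2, deriv S h < 0) ∧
      deriv S 1 = 0 ∧
      (∀ h ∈ Ioo (0 : ℝ) 2, h ≠ 1 → S h < S 1) ∧
      S 1 = 2 * (v - 2 : ℝ) * Real.sqrt (1 + Real.cos (π / (v - 2)) ^ 2) *
        Real.sin (π / (v - 2)) := by
  intro S hS
  set ω := π / (v - 2 : ℝ)
  have hv3 : (3 : ℝ) ≤ v - 2 := by
    have : (5 : ℝ) ≤ v := by exact_mod_cast hv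
    linarith
  have hK : 0 < (v - 2 : ℝ) * sin ω := mul_pos (by linarith)
    (sin_pos_of_pos_of_lt_pi (div_pos pi_pos (by linarith)) (div_lt_self pi_pos (by linarith)))
  obtain rfl : S = bipyramidArea ((v - 2 : ℝ) * sin ω) (cos ω ^ 2) := by
    rw [hS]
    funext h
    simp only [bipyramidArea, pyramidRadicand]
    ring_nf
  have hpos : ∀ h ∈ Ioo (0 : ℝ) 1, 0 < deriv (bipyramidArea _ (cos ω ^ 2)) h :=
    fun h hh => deriv_bipyramidArea_pos hK (sq_nonneg _) hh.1 hh.2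
  have hneg : ∀ h ∈ Ioo (1 : ℝ) 2, deriv (bipyramidArea _ _) h < 0 := fun h hh => by
    rw [deriv_bipyramidArea_eq_neg, neg_neg_iff_pos]
    exact hpos _ ⟨by linarith [hh.2], by linarith [hh.1]⟩
  refine ⟨hpos, hneg, deriv_bipyramidArea_one _ _, fun h hh hne => ?_, ?_⟩
  · exact lt_of_deriv_pos_of_deriv_neg (continuous_bipyramidArea _ _).continuousOn hpos hneg
      ⟨zero_le_one, one_le_two⟩ (Ioo_subset_Icc_self hh) hne
  · rw [bipyramidArea_one]
    ring
end

section
/- 4η − 2η² + 2√(4η² − η⁴) < 3√15/2, where η = (1/3)(1 − √46·sin(π/6 − (1/3)·arccos(−149/(23√46)))) is the root of 2h³ − 2h² − 7h + 8 = 0 in (1, 1.5). In fact, 4η − 2η² + 2√(4η² − η⁴) < 5.78 < 5.80 < 3√15/2. -/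
/-!
By Viète's trigonometric method, `s = sin (π/6 - arccos x / 3)` satisfies `3s - 4s³ = x` and
`|s| ≤ 1/2`; for `x = -149/(23√46)` this makes `η = (1 - √46 s)/3` a root of
`2h³ - 2h² - 7h + 8` in `[-0.8, 1.4651]`. That interval contains only the middle root, which
sign changes locate in `[1.262, 1.2624]`, and there the area stays below `5.78`.
-/

open Real

/-- The paper's `F₅`, the surface area of the inscribed 5-pyramid. -/
noncomputable def pyramidArea (h : ℝ) : ℝ :=
  4 * h - 2 * h ^ 2 + 2 * √(4 * h ^ 2 - h ^ 4)

theorem sin_pi_div_six_sub_arccos_div_three_cubic {x : ℝ} (hx₁ : -1 ≤ x) (hx₂ : x ≤ 1) :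
    3 * sin (π / 6 - (1 / 3) * arccos x) - 4 * sin (π / 6 - (1 / 3) * arccos x) ^ 3 = x := by
  rw [← sin_three_mul, show 3 * (π / 6 - (1 / 3) * arccos x) = π / 2 - arccos x by ring,
    sin_pi_div_two_sub, cos_arccos hx₁ hx₂]

theorem sin_pi_div_six_sub_arccos_div_three_mem_Icc (x : ℝ) :
    sin (π / 6 - (1 / 3) * arccos x) ∈ Set.Icc (-(1 / 2)) (1 / 2) := by
  have h₀ := arccos_nonneg x
  have hπ := arccos_le_pi x
  have := pi_pos
  constructor
  · rw [← sin_pi_div_six, ← sin_neg]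
    exact sin_le_sin_of_le_of_le_pi_div_two (by linarith) (by linarith) (by linarith)
  · rw [← sin_pi_div_six]
    exact sin_le_sin_of_le_of_le_pi_div_two (by linarith) (by linarith) (by linarith)

theorem η_cubic_eq_zero_and_mem_Icc :
    2 * η ^ 3 - 2 * η ^ 2 - 7 * η + 8 = 0 ∧ η ∈ Set.Icc (-0.8) 1.4651 := by
  have h46 : √46 ^ 2 = 46 := sq_sqrt (by norm_num)
  have h46lo : (6.78 : ℝ) < √46 := by nlinarith [sqrt_nonneg 46]
  have h46hi : √46 < 6.79 := by nlinarith [sqrt_nonneg 46]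
  have hx₁ : -1 ≤ -149 / (23 * √46) := by
    rw [neg_div, neg_le_neg_iff, div_le_one (by positivity)]
    linarith
  have hx₂ : -149 / (23 * √46) ≤ 1 :=
    (div_nonpos_of_nonpos_of_nonneg (by norm_num) (by positivity)).trans zero_le_one
  have hs := sin_pi_div_six_sub_arccos_div_three_cubic hx₁ hx₂
  obtain ⟨hs₁, hs₂⟩ := sin_pi_div_six_sub_arccos_div_three_mem_Icc (-149 / (23 * √46))
  have hη : η = (1 - √46 * sin (π / 6 - (1 / 3) * arccos (-149 / (23 * √46)))) / 3 := by
    rw [η]; ring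
  generalize sin (π / 6 - (1 / 3) * arccos (-149 / (23 * √46))) = s at hs hs₁ hs₂ hη
  rw [hη]
  field_simp at hs
  refine ⟨?_, by nlinarith, by nlinarith⟩
  linear_combination (1 / 27 : ℝ) * hs - (2 / 27 : ℝ) * √46 * s ^ 3 * h46

theorem mem_Icc_of_cubic_eq_zero {h : ℝ} (hlo : -0.8 ≤ h) (hhi : h ≤ 1.4651)
    (hh : 2 * h ^ 3 - 2 * h ^ 2 - 7 * h + 8 = 0) : h ∈ Set.Icc 1.262 1.2624 := by
  -- For an endpoint `a`, the cubic is its value at `a` plus `(h - a)` times a quadratic that is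
  -- negative on `[-0.8, 1.4651]`.
  have hquad : 0 ≤ (1.4651 - h) * (h + 0.8) := mul_nonneg (by linarith) (by linarith)
  constructor
  · by_contra! h'
    nlinarith [mul_nonneg hquad (show (0:ℝ) ≤ 1.262 - h by linarith)]
  · by_contra! h'
    nlinarith [mul_nonneg hquad (show (0:ℝ) ≤ h - 1.2624 by linarith)]

theorem pyramidArea_lt {h : ℝ} (hh : h ∈ Set.Icc 1.262 1.2624) : pyramidArea h < 5.78 := by
  obtain ⟨hlo, hhi⟩ := hh
  have hsqrt : √(4 * h ^ 2 - h ^ 4) ≤ 1.95832 := by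
    rw [sqrt_le_left (by norm_num)]
    nlinarith [mul_nonneg (show (0:ℝ) ≤ 1.2624 ^ 2 - h ^ 2 by nlinarith)
      (show (0:ℝ) ≤ 4 - 1.2624 ^ 2 - h ^ 2 by nlinarith)]
  unfold pyramidArea
  nlinarith

theorem lt_three_mul_sqrt_fifteen_div_two : (5.80 : ℝ) < 3 * √15 / 2 := by
  have : (3.8667 : ℝ) < √15 := by rw [lt_sqrt (by norm_num)]; norm_num
  linarith

/-- The maximal surface area of an inscribed 5-pyramid is less than that of the optimal
5-bipyramid: 4η − 2η² + 2√(4η² − η⁴) < 5.78 < 5.80 < 3√15/2, where η is the root of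
2h³ − 2h² − 7h + 8 = 0 in (1, 1.5). -/
theorem pyramid_lt_bipyramid :
    η ∈ Set.Ioo (1 : ℝ) 1.5 ∧
    2 * η ^ 3 - 2 * η ^ 2 - 7 * η + 8 = 0 ∧
    4 * η - 2 * η ^ 2 + 2 * Real.sqrt (4 * η ^ 2 - η ^ 4) < 5.78 ∧
    (5.78 : ℝ) < 5.80 ∧
    (5.80 : ℝ) < 3 * Real.sqrt 15 / 2 := by
  obtain ⟨hcubic, hlo, hhi⟩ := η_cubic_eq_zero_and_mem_Icc
  obtain ⟨hη₁, hη₂⟩ := mem_Icc_of_cubic_eq_zero hlo hhi hcubic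
  exact ⟨⟨by linarith, by linarith⟩, hcubic, pyramidArea_lt ⟨hη₁, hη₂⟩, by norm_num,
    lt_three_mul_sqrt_fifteen_div_two⟩
end

section
/- For every v ≥ 5, the derivative of F_v(h) = ((v−1)/2)(2h − h²)·sin(2π/(v−1)) + (v−1)·sin(π/(v−1))·√(h²(2h − h²) + (2h − h²)²·cos²(π/(v−1))) at h = 4/3 is nonzero: F_v′(4/3) ≠ 0. -/
/-!
With `n = v - 1`, `c = cos (π / n)` and `r = √(2 + c²)`, a direct computation gives
`F_v'(4/3) = (2 n sin(π/n) / 3) · ((1 - c²) / r - c)`. The bracket is negative exactly when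
`(1 - c²)² < c² (2 + c²)`, i.e. `1 < 4 c²`, which holds because `π / n < π / 3` for `n ≥ 4`.
(For `v = 4` the derivative vanishes.)
-/

open Real

noncomputable def pyramidSurface (n h : ℝ) : ℝ :=
  (n / 2) * (2 * h - h ^ 2) * sin (2 * π / n) +
    n * sin (π / n) * √(h ^ 2 * (2 * h - h ^ 2) + (2 * h - h ^ 2) ^ 2 * cos (π / n) ^ 2)

lemma hasDerivAt_two_mul_sub_sq (x : ℝ) :
    HasDerivAt (fun h : ℝ => 2 * h - h ^ 2) (2 - 2 * x) x := by
  have hlin : HasDerivAt (fun h : ℝ => 2 * h) 2 x := by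
    simpa using (hasDerivAt_id x).const_mul 2
  have hsq : HasDerivAt (fun h : ℝ => h ^ 2) (2 * x) x := by
    simpa using hasDerivAt_pow 2 x
  exact hlin.sub hsq

lemma hasDerivAt_sqrt_lateral_four_thirds {k : ℝ} (hk : 0 ≤ k) :
    HasDerivAt (fun h : ℝ => √(h ^ 2 * (2 * h - h ^ 2) + (2 * h - h ^ 2) ^ 2 * k))
      (2 * (1 - k) / (3 * √(2 + k))) (4 / 3) := by
  have hbase := hasDerivAt_two_mul_sub_sq (4 / 3 : ℝ)
  have hradicand : HasDerivAt (fun h : ℝ => h ^ 2 * (2 * h - h ^ 2) + (2 * h - h ^ 2) ^ 2 * k)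
      (32 / 27 * (1 - k)) (4 / 3) := by
    have hsq : HasDerivAt (fun h : ℝ => h ^ 2) (2 * (4 / 3)) (4 / 3) := by
      simpa using hasDerivAt_pow 2 (4 / 3 : ℝ)
    exact ((hsq.mul hbase).add ((hbase.pow 2).mul_const k)).congr_deriv (by norm_num; ring)
  have hvalue : (4 / 3 : ℝ) ^ 2 * (2 * (4 / 3) - (4 / 3) ^ 2) + (2 * (4 / 3) - (4 / 3) ^ 2) ^ 2 * k
      = (8 / 9) ^ 2 * (2 + k) := by ring
  have hpos : 0 < √(2 + k) := sqrt_pos.mpr (by linarith)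
  refine (hradicand.sqrt (by rw [hvalue]; positivity)).congr_deriv ?_
  rw [hvalue, sqrt_mul (by positivity), sqrt_sq (by norm_num)]
  field_simp
  ring

lemma hasDerivAt_pyramidSurface_four_thirds (n : ℝ) :
    HasDerivAt (pyramidSurface n)
      (2 * n * sin (π / n) / 3 *
        ((1 - cos (π / n) ^ 2) / √(2 + cos (π / n) ^ 2) - cos (π / n))) (4 / 3) := by
  have hbase := hasDerivAt_two_mul_sub_sq (4 / 3 : ℝ)
  have hsin_two_mul : sin (2 * π / n) = 2 * sin (π / n) * cos (π / n) := by
    rw [mul_div_assoc, sin_two_mul]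
  refine (((hbase.const_mul (n / 2)).mul_const (sin (2 * π / n))).add
    ((hasDerivAt_sqrt_lateral_four_thirds (sq_nonneg (cos (π / n)))).const_mul
      (n * sin (π / n)))).congr_deriv ?_
  rw [hsin_two_mul]
  ring

lemma one_sub_sq_div_sqrt_two_add_sq_lt {c : ℝ} (hc : 1 / 2 < c) :
    (1 - c ^ 2) / √(2 + c ^ 2) < c := by
  have hr : 0 < √(2 + c ^ 2) := sqrt_pos.mpr (by positivity)
  have hr_sq : √(2 + c ^ 2) ^ 2 = 2 + c ^ 2 := sq_sqrt (by positivity)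
  rw [div_lt_iff₀ hr]
  -- `(1 - c²)² < c² (2 + c²)` is equivalent to `1 < 4 c²`
  nlinarith [mul_pos (by linarith : (0 : ℝ) < c) hr]

lemma half_lt_cos_pi_div {n : ℝ} (hn : 3 < n) : 1 / 2 < cos (π / n) := by
  rw [← cos_pi_div_three]
  exact cos_lt_cos_of_nonneg_of_le_pi (by positivity) (by linarith [pi_pos])
    (div_lt_div_of_pos_left pi_pos (by norm_num) hn)

lemma deriv_pyramidSurface_four_thirds_neg {n : ℝ} (hn : 3 < n) :
    deriv (pyramidSurface n) (4 / 3) < 0 := by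
  have hsin : 0 < sin (π / n) :=
    sin_pos_of_pos_of_lt_pi (by positivity) (div_lt_self pi_pos (by linarith))
  rw [(hasDerivAt_pyramidSurface_four_thirds n).deriv]
  exact mul_neg_of_pos_of_neg (by positivity)
    (sub_neg.mpr (one_sub_sq_div_sqrt_two_add_sq_lt (half_lt_cos_pi_div hn)))

/-- For v ≥ 5, the derivative of the pyramid surface-area function
F_v(h) = ((v−1)/2)(2h − h²)·sin(2π/(v−1)) + (v−1)·sin(π/(v−1))·√(h²(2h−h²) + (2h−h²)²cos²(π/(v−1)))
at h = 4/3 is nonzero. -/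
theorem surface_deriv_ne_zero_at_volume_max (v : ℕ) (hv : 5 ≤ v) :
    deriv (fun h : ℝ =>
      ((v - 1 : ℝ) / 2) * (2 * h - h ^ 2) * Real.sin (2 * π / (v - 1)) +
        (v - 1 : ℝ) * Real.sin (π / (v - 1)) *
          Real.sqrt (h ^ 2 * (2 * h - h ^ 2) +
            (2 * h - h ^ 2) ^ 2 * Real.cos (π / (v - 1)) ^ 2)) (4 / 3) ≠ 0 := by
  have hn : (3 : ℝ) < v - 1 := by
    have : (5 : ℝ) ≤ v := by exact_mod_cast hv
    linarith
  exact (deriv_pyramidSurface_four_thirds_neg hn).ne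
end

section
/- Let g(h) = √(2h³ − h⁴ + c·(2h − h²)²) + √((2−h)²(2h − h²) + c·(2h − h²)²) for a constant c ∈ (0,1) and h ∈ (0,2). Then g(h) = g(2 − h) for all h ∈ (0,2), and g attains its strict maximum at h = 1 with g(1) = 2√(1 + c). -/
open Real Set

/-!
In the variable `t = h - 1` the two radicands are `(1 ± t)² (1 - t²) + c (1 - t²)²`, which are
exchanged by `t ↦ -t`; this is the symmetry. Their sum is `2 (1 + c) - 4 c t² - 2 (1 - c) t⁴`, which
for `0 < c ≤ 1` is strictly maximal at `t = 0`, and `√a + √b ≤ √(2 (a + b))` transfers this to `g`.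
-/

lemma Real.sqrt_add_sqrt_le_sqrt_two_mul_add {a b : ℝ} (ha : 0 ≤ a) (hb : 0 ≤ b) :
    √a + √b ≤ √(2 * (a + b)) :=
  Real.le_sqrt_of_sq_le <| by
    simpa only [Real.sq_sqrt ha, Real.sq_sqrt hb] using add_sq_le (a := √a) (b := √b)

namespace Bipyramid

def radicand (c h : ℝ) : ℝ := 2 * h ^ 3 - h ^ 4 + c * (2 * h - h ^ 2) ^ 2

variable {c h : ℝ}

lemma radicand_two_sub (c h : ℝ) :
    radicand c (2 - h) = (2 - h) ^ 2 * (2 * h - h ^ 2) + c * (2 * h - h ^ 2) ^ 2 := by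
  unfold radicand; ring

lemma radicand_one (c : ℝ) : radicand c 1 = 1 + c := by
  unfold radicand; ring

lemma radicand_nonneg (hc : 0 ≤ c) (hh : h ∈ Icc (0 : ℝ) 2) : 0 ≤ radicand c h := by
  have hu : 0 ≤ 2 * h - h ^ 2 := by nlinarith [hh.1, hh.2]
  have : radicand c h = h ^ 2 * (2 * h - h ^ 2) + c * (2 * h - h ^ 2) ^ 2 := by
    unfold radicand; ring
  rw [this]
  positivity

lemma radicand_add_radicand_two_sub (c h : ℝ) :
    radicand c h + radicand c (2 - h) = 2 * (1 + c) - 4 * c * (h - 1) ^ 2 - 2 * (1 - c) * (h - 1) ^ 4 := by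
  unfold radicand; ring

lemma two_mul_radicand_add_radicand_two_sub_lt (hc : c ∈ Ioo (0 : ℝ) 1) (hh : h ≠ 1) :
    2 * (radicand c h + radicand c (2 - h)) < 4 * (1 + c) := by
  have ht : 0 < (h - 1) ^ 2 := by positivity [sub_ne_zero.mpr hh]
  rw [radicand_add_radicand_two_sub]
  nlinarith [mul_pos hc.1 ht, mul_nonneg (sub_nonneg.mpr hc.2.le) (pow_nonneg ht.le 2)]

end Bipyramid

open Bipyramid in
/-- For c ∈ (0,1), the function
g(h) = √(2h³ − h⁴ + c(2h − h²)²) + √((2−h)²(2h − h²) + c(2h − h²)²) on (0,2) satisfies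
g(h) = g(2 − h), and attains its strict maximum at h = 1 with g(1) = 2√(1 + c). -/
theorem bipyramid_g_symmetric_max (c : ℝ) (hc : c ∈ Ioo (0 : ℝ) 1)
    (g : ℝ → ℝ)
    (hg : g = fun h => Real.sqrt (2 * h ^ 3 - h ^ 4 + c * (2 * h - h ^ 2) ^ 2) +
      Real.sqrt ((2 - h) ^ 2 * (2 * h - h ^ 2) + c * (2 * h - h ^ 2) ^ 2)) :
    (∀ h ∈ Ioo (0 : ℝ) 2, g h = g (2 - h)) ∧
    (∀ h ∈ Ioo (0 : ℝ) 2, h ≠ 1 → g h < g 1) ∧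
    g 1 = 2 * Real.sqrt (1 + c) := by
  have hg' : g = fun h => √(radicand c h) + √(radicand c (2 - h)) := by
    rw [hg]; funext h; rw [← radicand_two_sub]; rfl
  have hg1 : g 1 = 2 * √(1 + c) := by
    rw [hg']; norm_num [radicand_one]; ring
  refine ⟨fun h _ => ?_, fun h hh hne => ?_, hg1⟩
  · rw [hg']; dsimp only; rw [sub_sub_cancel, add_comm]
  · have ha := radicand_nonneg hc.1.le (Ioo_subset_Icc_self hh)
    have hb := radicand_nonneg (h := 2 - h) hc.1.le ⟨by linarith [hh.2], by linarith [hh.1]⟩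
    calc g h ≤ √(2 * (radicand c h + radicand c (2 - h))) := by
          rw [hg']
          exact Real.sqrt_add_sqrt_le_sqrt_two_mul_add ha hb
      _ < √(4 * (1 + c)) := Real.sqrt_lt_sqrt (by positivity)
          (two_mul_radicand_add_radicand_two_sub_lt hc hne)
      _ = g 1 := by
          rw [hg1, Real.sqrt_mul' _ (by linarith [hc.1]),
            show (4 : ℝ) = 2 ^ 2 by norm_num, Real.sqrt_sq zero_le_two]
end
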